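/- arXiv:1602.00771 — 6 statements merged into one kernel-verified Lean document; each statement's English description precedes it below -/
import Mathlib

section
/- Let A = (a_ij) be the adjacency matrix of an undirected connected graph on N ≥ 2 nodes (a_ij ∈ {0,1}, a_ii = 0, a_ij = a_ji), let L = D − A be its Laplacian with D = diag(Σ_j a_1j,…,Σ_j a_Nj), and let B₀ be the N²×N² diagonal matrix whose diagonal entries are a_11, a_12,…, a_1N, a_21,…, a_NN in this order. Then the matrix L ⊗ I_N + B₀ (Kronecker product with the N×N identity) is symmetric positive definite; equivalently, −(L ⊗ I_N + B₀) is Hurwitz. -/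
/-!
Since `L ⊗ I_N = blockdiag(L, …, L)`, the matrix `L ⊗ I_N + B₀` is block diagonal over the
second index, its `k`-th block being the grounded Laplacian `L + diag(a_1k, …, a_Nk)`. Each block
is positive definite: `xᵀ L x = 0` forces `x` to be constant on the connected graph, and the
diagonal term forces `x` to vanish at a neighbour of `k`, which exists because `N ≥ 2`. A real
positive definite matrix stays positive definite over `ℂ`, so the eigenvalues of its negative
have negative real part.
-/

open scoped Classical ComplexOrder
open Kronecker Matrix

namespace Matrix

variable {m n : Type*} [Fintype m] [Fintype n]

theorem re_star_dotProduct_map_algebraMap_mulVec (M : Matrix n n ℝ) (v : n → ℂ) :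
    (star v ⬝ᵥ M.map (algebraMap ℝ ℂ) *ᵥ v).re
      = (fun i => (v i).re) ⬝ᵥ M *ᵥ (fun i => (v i).re)
        + (fun i => (v i).im) ⬝ᵥ M *ᵥ (fun i => (v i).im) := by
  simp only [dotProduct, mulVec, map_apply, Pi.star_apply, Finset.mul_sum, Complex.re_sum,
    ← Finset.sum_add_distrib]
  refine Finset.sum_congr rfl fun i _ => Finset.sum_congr rfl fun j _ => ?_
  simp only [Complex.mul_re, Complex.star_def, Complex.conj_re, Complex.conj_im, Complex.mul_im,
    Complex.coe_algebraMap, Complex.ofReal_re, Complex.ofReal_im]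
  ring

theorem PosDef.map_algebraMap_complex {M : Matrix n n ℝ} (hM : M.PosDef) :
    (M.map (algebraMap ℝ ℂ)).PosDef := by
  have hMc : (M.map (algebraMap ℝ ℂ)).IsHermitian := hM.isHermitian.map _ fun _ => by simp
  refine .of_dotProduct_mulVec_pos hMc fun v hv =>
    RCLike.pos_iff.mpr ⟨?_, hMc.im_star_dotProduct_mulVec_self v⟩
  have hpos {a : n → ℝ} (ha : a ≠ 0) : 0 < a ⬝ᵥ M *ᵥ a := by
    simpa using hM.dotProduct_mulVec_pos ha
  have hnonneg (a : n → ℝ) : 0 ≤ a ⬝ᵥ M *ᵥ a := by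
    simpa using hM.posSemidef.dotProduct_mulVec_nonneg a
  rw [RCLike.re_eq_complex_re, re_star_dotProduct_map_algebraMap_mulVec]
  by_cases hre : (fun i => (v i).re) = 0
  · have him : (fun i => (v i).im) ≠ 0 := fun him =>
      hv (funext fun i => Complex.ext (congrFun hre i) (congrFun him i))
    exact add_pos_of_nonneg_of_pos (hnonneg _) (hpos him)
  · exact add_pos_of_pos_of_nonneg (hpos hre) (hnonneg _)

theorem PosDef.re_lt_zero_of_mem_spectrum_neg {M : Matrix n n ℝ} [DecidableEq n] (hM : M.PosDef)
    {μ : ℂ} (hμ : μ ∈ spectrum ℂ ((-M).map (algebraMap ℝ ℂ))) : μ.re < 0 := by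
  have hMc := hM.map_algebraMap_complex
  rw [Matrix.map_neg _ (map_neg _), ← spectrum.neg_eq, Set.mem_neg,
    hMc.isHermitian.spectrum_eq_image_range] at hμ
  obtain ⟨_, ⟨i, rfl⟩, hi⟩ := hμ
  rw [← neg_neg μ, ← hi]
  simpa using hMc.eigenvalues_pos i

theorem star_dotProduct_blockDiagonal_mulVec {R : Type*} [CommSemiring R] [StarRing R]
    [DecidableEq n] (M : n → Matrix m m R) (x : m × n → R) :
    star x ⬝ᵥ blockDiagonal M *ᵥ x = ∑ k, star (fun i => x (i, k)) ⬝ᵥ M k *ᵥ fun i => x (i, k) := by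
  simp only [dotProduct, mulVec, blockDiagonal_apply, Fintype.sum_prod_type, Pi.star_apply,
    ite_mul, zero_mul, Finset.sum_ite_eq, Finset.mem_univ, if_true]
  exact Finset.sum_comm

theorem PosDef.blockDiagonal {R : Type*} [CommRing R] [PartialOrder R] [StarRing R]
    [IsOrderedCancelAddMonoid R] [DecidableEq n] {M : n → Matrix m m R} (hM : ∀ k, (M k).PosDef) :
    (blockDiagonal M).PosDef := by
  refine .of_dotProduct_mulVec_pos (isHermitian_blockDiagonal_iff.mpr fun k => (hM k).isHermitian)
    fun x hx => ?_
  obtain ⟨⟨i, k⟩, hik⟩ := Function.ne_iff.mp hx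
  rw [star_dotProduct_blockDiagonal_mulVec]
  exact Finset.sum_pos' (fun k _ => (hM k).posSemidef.dotProduct_mulVec_nonneg _)
    ⟨k, Finset.mem_univ k, (hM k).dotProduct_mulVec_pos fun h => hik (congrFun h i)⟩

end Matrix

namespace SimpleGraph

variable {V : Type*} [Fintype V] [DecidableEq V] {G : SimpleGraph V} [DecidableRel G.Adj]

theorem posDef_lapMatrix_add_diagonal (hG : G.Connected) {d : V → ℝ} (hd : 0 ≤ d) {c : V}
    (hc : d c ≠ 0) : (G.lapMatrix ℝ + diagonal d).PosDef := by
  have hL := posSemidef_lapMatrix ℝ G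
  have hD := PosSemidef.diagonal hd
  refine .of_dotProduct_mulVec_pos (hL.add hD).isHermitian fun x hx => ?_
  refine ((hL.add hD).dotProduct_mulVec_nonneg x).lt_of_ne fun h => hx ?_
  rw [add_mulVec, dotProduct_add, eq_comm, add_eq_zero_iff_of_nonneg
    (hL.dotProduct_mulVec_nonneg x) (hD.dotProduct_mulVec_nonneg x),
    hL.dotProduct_mulVec_zero_iff, hD.dotProduct_mulVec_zero_iff,
    lapMatrix_mulVec_eq_zero_iff_forall_reachable] at h
  obtain ⟨hconst, hdiag⟩ := h
  have hxc : x c = 0 := by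
    simpa [mulVec_diagonal, hc] using congrFun hdiag c
  exact funext fun i => (hconst i c (hG.preconnected i c)).trans hxc

theorem posDef_lapMatrix_kronecker_one_add_diagonal_adjMatrix [Nontrivial V] (hG : G.Connected) :
    (G.lapMatrix ℝ ⊗ₖ (1 : Matrix V V ℝ) +
      diagonal fun p : V × V => G.adjMatrix ℝ p.1 p.2).PosDef := by
  rw [kronecker_one, ← blockDiagonal_diagonal fun k i => G.adjMatrix ℝ i k, ← blockDiagonal_add]
  refine PosDef.blockDiagonal fun k => ?_
  obtain ⟨c, hc⟩ := hG.preconnected.exists_adj_of_nontrivial k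
  refine posDef_lapMatrix_add_diagonal hG (c := c) (fun i => ?_) (by simp [hc.symm])
  by_cases h : G.Adj i k <;> simp [h]

end SimpleGraph

theorem statement6 {N : ℕ} (hN : 2 ≤ N)
    (A : Fin N → Fin N → ℝ) (G : SimpleGraph (Fin N))
    (hA : ∀ i j, A i j = if G.Adj i j then (1 : ℝ) else 0)
    (hG : G.Connected)
    (L : Matrix (Fin N) (Fin N) ℝ)
    (hL : L = Matrix.diagonal (fun i => ∑ j, A i j) - Matrix.of A)
    (B0 : Matrix (Fin N × Fin N) (Fin N × Fin N) ℝ)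
    (hB0 : B0 = Matrix.diagonal fun p => A p.1 p.2) :
    (L ⊗ₖ (1 : Matrix (Fin N) (Fin N) ℝ) + B0).PosDef ∧
    (∀ μ ∈ spectrum ℂ
      ((-(L ⊗ₖ (1 : Matrix (Fin N) (Fin N) ℝ) + B0)).map (algebraMap ℝ ℂ)), μ.re < 0) := by
  obtain rfl : A = G.adjMatrix ℝ := funext₂ hA
  obtain rfl : L = G.lapMatrix ℝ := by
    rw [hL, SimpleGraph.lapMatrix, SimpleGraph.degMatrix]
    simp only [SimpleGraph.degree_eq_sum_if_adj, SimpleGraph.adjMatrix_apply]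
    rfl
  subst hB0
  have : Nontrivial (Fin N) := Fin.nontrivial_iff_two_le.mpr hN
  have hM := SimpleGraph.posDef_lapMatrix_kronecker_one_add_diagonal_adjMatrix hG
  exact ⟨hM, fun μ => hM.re_lt_zero_of_mem_spectrum_neg⟩
end

section
/- Let A = (a_ij) be the adjacency matrix of an undirected connected graph on N ≥ 2 nodes (a_ij ∈ {0,1}, a_ii = 0, a_ij = a_ji), and fix x ∈ ℝ^N. Then the system of N² linear equations in the unknowns (y_ij)_{i,j=1,…,N}: Σ_{k=1}^N a_ik (y_ij − y_kj) + a_ij (y_ij − x_j) = 0 for all i, j ∈ {1,…,N}, has the unique solution y_ij = x_j for all i, j. -/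
/-!
For a fixed column `j`, the defect `z i = y (i, j) - x j` solves `(L + D) z = 0`, where `L` is the
Laplacian of the graph and `D` the diagonal matrix of the `j`-th column of `A`. Pairing with `z`
gives `∑_{i ~ k} (z i - z k)² / 2 + ∑_{i ~ j} (z i)² = 0`, so `z` is constant on the connected
graph and vanishes at a neighbour of `j`, which exists because `N ≥ 2`.
-/

open Matrix Finset

namespace SimpleGraph

variable {V : Type*} [Fintype V] [DecidableEq V] {G : SimpleGraph V} [DecidableRel G.Adj]

theorem lapMatrix_mulVec_apply_eq_sum_adjMatrix (z : V → ℝ) (i : V) :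
    (G.lapMatrix ℝ *ᵥ z) i = ∑ k, G.adjMatrix ℝ i k * (z i - z k) := by
  simp [lapMatrix_mulVec_apply, adjMatrix_apply, mul_sub, sum_sub_distrib, ite_mul, sum_ite,
    ← neighborFinset_eq_filter]

theorem dotProduct_lapMatrix_add_diagonal_mulVec (d z : V → ℝ) :
    z ⬝ᵥ ((G.lapMatrix ℝ + diagonal d) *ᵥ z) =
      toLinearMap₂' ℝ (G.lapMatrix ℝ) z z + ∑ a, d a * z a ^ 2 := by
  rw [add_mulVec, dotProduct_add, toLinearMap₂'_apply']
  congr 1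
  simp only [dotProduct, mulVec_diagonal]
  exact sum_congr rfl fun a _ => by ring

theorem Connected.eq_zero_of_lapMatrix_add_diagonal_mulVec_eq_zero (hG : G.Connected)
    {d : V → ℝ} (hd : 0 ≤ d) {v : V} (hv : 0 < d v) {z : V → ℝ}
    (hz : (G.lapMatrix ℝ + diagonal d) *ᵥ z = 0) : z = 0 := by
  have hq := dotProduct_lapMatrix_add_diagonal_mulVec (G := G) d z
  rw [hz, dotProduct_zero] at hq
  have hL : 0 ≤ toLinearMap₂' ℝ (G.lapMatrix ℝ) z z := by
    rw [lapMatrix_toLinearMap₂']; positivity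
  have hD : ∀ a ∈ univ, 0 ≤ d a * z a ^ 2 := fun a _ => mul_nonneg (hd a) (sq_nonneg _)
  have hconst := (lapMatrix_toLinearMap₂'_apply'_eq_zero_iff_forall_reachable G z).1
    (by linarith [sum_nonneg hD])
  have hzv : z v = 0 := by
    have := (sum_eq_zero_iff_of_nonneg hD).1 (by linarith [sum_nonneg hD]) v (mem_univ v)
    simpa [hv.ne'] using this
  funext a
  rw [Pi.zero_apply, hconst a v (hG.preconnected a v), hzv]

end SimpleGraph

open scoped BigOperators Classical

theorem statement7 {N : ℕ} (hN : 2 ≤ N)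
    (A : Fin N → Fin N → ℝ) (G : SimpleGraph (Fin N))
    (hA : ∀ i j, A i j = if G.Adj i j then (1 : ℝ) else 0)
    (hG : G.Connected)
    (x : Fin N → ℝ) (y : Fin N × Fin N → ℝ) :
    (∀ i j, (∑ k, A i k * (y (i, j) - y (k, j))) + A i j * (y (i, j) - x j) = 0) ↔
      (∀ i j, y (i, j) = x j) := by
  obtain rfl : A = G.adjMatrix ℝ := by ext i j; simp [hA]
  have : Nontrivial (Fin N) := Fin.nontrivial_iff_two_le.2 hN
  refine ⟨fun h i j => ?_, fun h i j => by simp [h]⟩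
  obtain ⟨u, hju⟩ := hG.preconnected.exists_adj_of_nontrivial j
  have hd : 0 ≤ fun a => G.adjMatrix ℝ a j := fun a => by
    simp only [SimpleGraph.adjMatrix_apply]; positivity
  have hz : (G.lapMatrix ℝ + diagonal fun a => G.adjMatrix ℝ a j) *ᵥ
      (fun a => y (a, j) - x j) = 0 := by
    ext a
    rw [add_mulVec, Pi.add_apply, SimpleGraph.lapMatrix_mulVec_apply_eq_sum_adjMatrix,
      mulVec_diagonal, Pi.zero_apply, ← h a j]
    simp
  have hzero := hG.eq_zero_of_lapMatrix_add_diagonal_mulVec_eq_zero hd (v := u)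
    (by simp [hju.symm]) hz
  exact sub_eq_zero.1 (congrFun hzero i)
end

section
/- Consider a game with N players with continuously differentiable payoff functions f_i : ℝ^N → ℝ such that each f_i(x_i, x_{-i}) is concave in x_i, and suppose the pseudogradient G(x) = (∂f_1/∂x_1(x),…,∂f_N/∂x_N(x)) satisfies (x − z)ᵀ(G(x) − G(z)) < 0 for all x ≠ z in ℝ^N. Then the game has at most one Nash equilibrium. -/
open scoped BigOperators

/-- Partial derivative of `f : ℝ^n → ℝ` with respect to the `j`-th coordinate at `x`. -/
noncomputable def pdv {n : ℕ} (f : (Fin n → ℝ) → ℝ) (j : Fin n) (x : Fin n → ℝ) : ℝ :=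
  deriv (fun t => f (Function.update x j t)) (x j)

-- No differentiability is needed: `deriv` is `0` where the derivative does not exist.
theorem pdv_eq_zero_of_forall_update_le {n : ℕ} {f : (Fin n → ℝ) → ℝ} {i : Fin n}
    {x : Fin n → ℝ} (h : ∀ t, f (Function.update x i t) ≤ f x) : pdv f i x = 0 := by
  have hmax : IsLocalMax (fun t => f (Function.update x i t)) (x i) :=
    Filter.Eventually.of_forall fun t => by simpa only [Function.update_eq_self] using h t
  exact hmax.deriv_eq_zero

theorem statement9_general {N : ℕ} (f : Fin N → (Fin N → ℝ) → ℝ)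
    (hmono : ∀ x z : Fin N → ℝ, x ≠ z →
      ∑ i, (x i - z i) * (pdv (f i) i x - pdv (f i) i z) < 0) :
    ∀ x z : Fin N → ℝ,
      (∀ (i : Fin N) (xi : ℝ), f i (Function.update x i xi) ≤ f i x) →
      (∀ (i : Fin N) (xi : ℝ), f i (Function.update z i xi) ≤ f i z) →
      x = z := by
  intro x z hx hz
  by_contra hne
  have hsum := hmono x z hne
  simp only [pdv_eq_zero_of_forall_update_le (hx _), pdv_eq_zero_of_forall_update_le (hz _),
    sub_zero, mul_zero, Finset.sum_const_zero, lt_self_iff_false] at hsum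

theorem statement9 {N : ℕ} (f : Fin N → (Fin N → ℝ) → ℝ)
    (hf : ∀ i, ContDiff ℝ 1 (f i))
    (hconcave : ∀ (i : Fin N) (x : Fin N → ℝ),
      ConcaveOn ℝ Set.univ (fun t => f i (Function.update x i t)))
    (hmono : ∀ x z : Fin N → ℝ, x ≠ z →
      ∑ i, (x i - z i) * (pdv (f i) i x - pdv (f i) i z) < 0) :
    ∀ x z : Fin N → ℝ,
      (∀ (i : Fin N) (xi : ℝ), f i (Function.update x i xi) ≤ f i x) →
      (∀ (i : Fin N) (xi : ℝ), f i (Function.update z i xi) ≤ f i z) →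
      x = z :=
  statement9_general f hmono
end

section
/- Consider a quadratic game with N players whose payoffs are f_i(x) = (1/2) Σ_{j,k} h^i_{jk} x_j x_k + Σ_j v^i_j x_j + g_i with h^i_{ii} < 0 and h^i_{jk} = h^i_{kj} for all i, j, k. Assume the matrix H = (h^i_{ij})_{i,j} is strictly diagonally dominant. Then H is invertible, the game has a unique Nash equilibrium, and it is given by x* = −H⁻¹ v where v = (v^1_1,…,v^N_N)ᵀ. -/
open scoped BigOperators

/-- The point `x* = -H⁻¹ v` of the quadratic game with coefficients
`h` (where `H i j = h i i j`) and `v` (where the vector is `i ↦ v i i`). -/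
noncomputable def quadNE {N : ℕ} (h : Fin N → Fin N → Fin N → ℝ)
    (v : Fin N → Fin N → ℝ) : Fin N → ℝ :=
  -((Matrix.of fun i j => h i i j)⁻¹.mulVec fun i => v i i)

theorem statement11 {N : ℕ} (f : Fin N → (Fin N → ℝ) → ℝ)
    (h : Fin N → Fin N → Fin N → ℝ) (v : Fin N → Fin N → ℝ) (g : Fin N → ℝ)
    (hfdef : ∀ i x, f i x =
      (1 / 2) * (∑ j, ∑ l, h i j l * x j * x l) + (∑ j, v i j * x j) + g i)
    (hdiag : ∀ i, h i i i < 0)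
    (hsymm : ∀ i j l, h i j l = h i l j)
    (hSDD : ∀ i, ∑ j ∈ Finset.univ.erase i, |h i i j| < |h i i i|) :
    IsUnit ((Matrix.of fun i j => h i i j) : Matrix (Fin N) (Fin N) ℝ).det ∧
    (∀ (i : Fin N) (xi : ℝ),
      f i (Function.update (quadNE h v) i xi) ≤ f i (quadNE h v)) ∧
    (∀ z : Fin N → ℝ,
      (∀ (i : Fin N) (xi : ℝ), f i (Function.update z i xi) ≤ f i z) →
      z = quadNE h v) := by
  set H : Matrix (Fin N) (Fin N) ℝ := Matrix.of fun i j => h i i j with hH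
  have hdet : H.det ≠ 0 := by
    apply det_ne_zero_of_sum_row_lt_diag
    intro k
    simpa [Real.norm_eq_abs, hH] using hSDD k
  have hdetU : IsUnit H.det := isUnit_iff_ne_zero.mpr hdet
  -- expansion of the double sum isolating index i
  have expand : ∀ (i : Fin N) (y : Fin N → ℝ),
      ∑ j, ∑ l, h i j l * y j * y l
        = h i i i * y i * y i
          + 2 * ((∑ l ∈ Finset.univ.erase i, h i i l * y l) * y i)
          + ∑ j ∈ Finset.univ.erase i, ∑ l ∈ Finset.univ.erase i,
              h i j l * y j * y l := by
    intro i y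
    rw [← Finset.add_sum_erase _ _ (Finset.mem_univ i),
        ← Finset.add_sum_erase _ (fun l => h i i l * y i * y l) (Finset.mem_univ i)]
    have inner : ∀ j ∈ Finset.univ.erase i,
        ∑ l, h i j l * y j * y l
          = h i i j * y j * y i + ∑ l ∈ Finset.univ.erase i, h i j l * y j * y l := by
      intro j _
      rw [← Finset.add_sum_erase _ (fun l => h i j l * y j * y l) (Finset.mem_univ i),
          hsymm i j i]
    rw [Finset.sum_congr rfl inner, Finset.sum_add_distrib, Finset.sum_mul, Finset.mul_sum]
    have comb : ∑ l ∈ Finset.univ.erase i, 2 * (h i i l * y l * y i)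
        = (∑ l ∈ Finset.univ.erase i, h i i l * y i * y l)
          + ∑ l ∈ Finset.univ.erase i, h i i l * y l * y i := by
      rw [← Finset.sum_add_distrib]
      exact Finset.sum_congr rfl fun l _ => by ring
    rw [comb]
    ring
  -- difference formula
  have diff : ∀ (i : Fin N) (x : Fin N → ℝ) (t : ℝ),
      f i (Function.update x i t) - f i x
        = (1/2) * h i i i * (t - x i)^2
          + (∑ l, h i i l * x l + v i i) * (t - x i) := by
    intro i x t
    have hupd_i : Function.update x i t i = t := Function.update_self i t x
    have hupd : ∀ l ∈ Finset.univ.erase i, Function.update x i t l = x l := by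
      intro l hl
      exact Function.update_of_ne (Finset.ne_of_mem_erase hl) t x
    rw [hfdef, hfdef, expand i (Function.update x i t), expand i x]
    have e1 : ∑ l ∈ Finset.univ.erase i, h i i l * Function.update x i t l
        = ∑ l ∈ Finset.univ.erase i, h i i l * x l :=
      Finset.sum_congr rfl fun l hl => by rw [hupd l hl]
    have e2 : ∑ j ∈ Finset.univ.erase i, ∑ l ∈ Finset.univ.erase i,
          h i j l * Function.update x i t j * Function.update x i t l
        = ∑ j ∈ Finset.univ.erase i, ∑ l ∈ Finset.univ.erase i, h i j l * x j * x l :=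
      Finset.sum_congr rfl fun j hj => Finset.sum_congr rfl fun l hl => by
        rw [hupd j hj, hupd l hl]
    have e3 : ∑ j, v i j * Function.update x i t j
        = v i i * t + ∑ j ∈ Finset.univ.erase i, v i j * x j := by
      rw [← Finset.add_sum_erase _ (fun j => v i j * Function.update x i t j)
            (Finset.mem_univ i), hupd_i]
      exact congrArg _ (Finset.sum_congr rfl fun j hj => by rw [hupd j hj])
    have e4 : ∑ j, v i j * x j = v i i * x i + ∑ j ∈ Finset.univ.erase i, v i j * x j := by
      rw [← Finset.add_sum_erase _ (fun j => v i j * x j) (Finset.mem_univ i)]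
    have e5 : ∑ l, h i i l * x l
        = h i i i * x i + ∑ l ∈ Finset.univ.erase i, h i i l * x l := by
      rw [← Finset.add_sum_erase _ (fun l => h i i l * x l) (Finset.mem_univ i)]
    rw [hupd_i, e1, e2, e3, e4, e5]
    ring
  -- first order condition characterization
  have foc : ∀ (i : Fin N) (x : Fin N → ℝ),
      (∀ t, f i (Function.update x i t) ≤ f i x) ↔
        ∑ l, h i i l * x l + v i i = 0 := by
    intro i x
    have quad_le : ∀ a c : ℝ, a < 0 → (∀ s : ℝ, (1/2)*a*s^2 + c*s ≤ 0) → c = 0 := by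
      intro a c ha hs
      by_contra hc
      have ha' : a ≠ 0 := ne_of_lt ha
      have h1 := hs (-c / a)
      have h2 : (1/2)*a*(-c/a)^2 + c*(-c/a) = -((1/2)*(c^2/a)) := by
        field_simp
        ring
      rw [h2] at h1
      have h3 : c^2 / a < 0 := div_neg_of_pos_of_neg (by positivity) ha
      linarith
    constructor
    · intro hle
      apply quad_le _ _ (hdiag i)
      intro s
      have hs := hle (x i + s)
      rw [← sub_nonpos, diff] at hs
      simpa using hs
    · intro h0 t
      rw [← sub_nonpos, diff, h0, zero_mul, add_zero]
      have ha : h i i i < 0 := hdiag i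
      nlinarith [sq_nonneg (t - x i)]
  -- NE iff H.mulVec x = -(v i i)
  have mv : ∀ x : Fin N → ℝ, ∀ i, H.mulVec x i = ∑ l, h i i l * x l := by
    intro x i
    simp [Matrix.mulVec, dotProduct, hH]
  have NEchar : ∀ x : Fin N → ℝ,
      (∀ (i : Fin N) (xi : ℝ), f i (Function.update x i xi) ≤ f i x) ↔
        H.mulVec x = -(fun i => v i i) := by
    intro x
    constructor
    · intro hne
      funext i
      have := (foc i x).mp (hne i)
      simp only [mv, Pi.neg_apply]
      linarith
    · intro heq i xi
      apply ((foc i x).mpr _) xi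
      have := congrFun heq i
      rw [mv] at this
      simp only [Pi.neg_apply] at this
      linarith
  have hNEstar : H.mulVec (quadNE h v) = -(fun i => v i i) := by
    unfold quadNE
    rw [Matrix.mulVec_neg, Matrix.mulVec_mulVec, Matrix.mul_nonsing_inv _ hdetU,
        Matrix.one_mulVec]
  refine ⟨hdetU, (NEchar _).mpr hNEstar, ?_⟩
  intro z hz
  have hzeq : H.mulVec z = H.mulVec (quadNE h v) := by
    rw [(NEchar z).mp hz, hNEstar]
  have : H⁻¹.mulVec (H.mulVec z) = H⁻¹.mulVec (H.mulVec (quadNE h v)) := by rw [hzeq]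
  rwa [Matrix.mulVec_mulVec, Matrix.mulVec_mulVec, Matrix.nonsing_inv_mul _ hdetU,
      Matrix.one_mulVec, Matrix.one_mulVec] at this
end

section
/- Consider a game with N players with C² payoff functions f_i : ℝ^N → ℝ, and suppose x* ∈ ℝ^N satisfies ∂f_i/∂x_i(x*) = 0 and ∂²f_i/∂x_i²(x*) < 0 for every i, and that the Jacobian matrix B = (∂²f_i/(∂x_i∂x_j)(x*))_{i,j} is strictly diagonally dominant. Fix positive constants k̄_1,…,k̄_N. Then x* is locally exponentially stable for the gradient play dynamics ẋ_i = k̄_i ∂f_i/∂x_i(x): there exist r, M, λ > 0 such that every solution x(t) with ‖x(0) − x*‖ ≤ r satisfies ‖x(t) − x*‖ ≤ M e^{−λ t} ‖x(0) − x*‖ for all t ≥ 0. -/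
/-!
Let `B` be the Jacobian `(∂²f_i/∂x_i∂x_j)(x*)`. Its comparison matrix `A` (`|b_ii|` on the
diagonal, `-|b_ij|` off it) has nonpositive off-diagonal entries and, by strict diagonal dominance,
positive row sums; such a matrix is invertible with nonnegative inverse, so `cᵀA = 2·𝟙` has a
solution `c > 0`. Together with `2 b_ij y_i y_j ≤ |b_ij| (y_i² + y_j²)` and `b_ii = -|b_ii|`
this gives `∑ c_i y_i (B y)_i ≤ -‖y‖²`. Near `x*` the gradient-play field is
`K B (x - x*) + o(‖x - x*‖)` with `K = diag k̄`, so `V(x) = ∑ (c_i / k̄_i) (x_i - x*_i)²`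
satisfies `dV/dt ≤ -‖x - x*‖² ≤ -2μV` (some `μ > 0`) on a sublevel set of `V`. A barrier
argument shows that trajectories starting well inside that sublevel set never leave it, hence `V`
decays like `e^{-μt}`.
-/

open scoped BigOperators

/-- Euclidean norm on `ℝ^n` (as functions `Fin n → ℝ`). -/
noncomputable def euclNorm {n : ℕ} (x : Fin n → ℝ) : ℝ :=
  Real.sqrt (∑ i, (x i) ^ 2)

open Finset Matrix Filter Topology

section EuclNorm

variable {n : ℕ} {w : Fin n → ℝ}

theorem norm_le_euclNorm (y : Fin n → ℝ) : ‖y‖ ≤ euclNorm y := by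
  refine (pi_norm_le_iff_of_nonneg (Real.sqrt_nonneg _)).2 fun i => ?_
  rw [Real.norm_eq_abs]
  exact Real.abs_le_sqrt (single_le_sum (fun j _ => sq_nonneg (y j)) (mem_univ i))

theorem euclNorm_sq (y : Fin n → ℝ) : euclNorm y ^ 2 = ∑ i, y i ^ 2 :=
  Real.sq_sqrt (sum_nonneg fun i _ => sq_nonneg (y i))

theorem mul_euclNorm_sq_le_sum {m : ℝ} (hm : ∀ i, m ≤ w i) (y : Fin n → ℝ) :
    m * euclNorm y ^ 2 ≤ ∑ i, w i * y i ^ 2 := by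
  rw [euclNorm_sq, mul_sum]
  exact sum_le_sum fun i _ => mul_le_mul_of_nonneg_right (hm i) (sq_nonneg _)

theorem sum_le_mul_euclNorm_sq {W : ℝ} (hW : ∀ i, w i ≤ W) (y : Fin n → ℝ) :
    ∑ i, w i * y i ^ 2 ≤ W * euclNorm y ^ 2 := by
  rw [euclNorm_sq, mul_sum]
  exact sum_le_sum fun i _ => mul_le_mul_of_nonneg_right (hW i) (sq_nonneg _)

end EuclNorm

section ZMatrix

variable {ι : Type*} [Fintype ι] {A : Matrix ι ι ℝ}

theorem Matrix.nonneg_of_nonneg_mulVec (hoff : ∀ i j, i ≠ j → A i j ≤ 0)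
    (hrow : ∀ i, 0 < ∑ j, A i j) {u : ι → ℝ} (hu : ∀ i, 0 ≤ (A *ᵥ u) i) (j : ι) : 0 ≤ u j := by
  obtain ⟨m, -, hm⟩ := exists_min_image univ u ⟨j, mem_univ j⟩
  by_contra! hj
  -- at a minimal coordinate the off-diagonal terms can only lower `(A *ᵥ u) m`
  have hle : (A *ᵥ u) m ≤ (∑ j, A m j) * u m := by
    rw [mulVec, dotProduct, sum_mul]
    refine sum_le_sum fun l _ => ?_
    rcases eq_or_ne m l with rfl | hml
    · rfl
    · exact mul_le_mul_of_nonpos_left (hm l (mem_univ l)) (hoff m l hml)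
  have := mul_neg_of_pos_of_neg (hrow m) ((hm j (mem_univ j)).trans_lt hj)
  linarith [hu m]

theorem Matrix.isUnit_of_sum_row_pos [DecidableEq ι] (hoff : ∀ i j, i ≠ j → A i j ≤ 0)
    (hrow : ∀ i, 0 < ∑ j, A i j) : IsUnit A := by
  have hker : ∀ {u v}, A *ᵥ u = A *ᵥ v → ∀ j, 0 ≤ (u - v) j := fun huv =>
    nonneg_of_nonneg_mulVec hoff hrow fun i => by rw [mulVec_sub, huv, sub_self]; rfl
  refine mulVec_injective_iff_isUnit.1 fun u v huv => funext fun j => ?_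
  linarith [hker huv j, hker huv.symm j, Pi.sub_apply u v j, Pi.sub_apply v u j]

theorem Matrix.inv_nonneg_of_sum_row_pos [DecidableEq ι] (hoff : ∀ i j, i ≠ j → A i j ≤ 0)
    (hrow : ∀ i, 0 < ∑ j, A i j) (i j : ι) : 0 ≤ A⁻¹ i j := by
  have hA := (isUnit_iff_isUnit_det A).1 (isUnit_of_sum_row_pos hoff hrow)
  have hcol : A *ᵥ (A⁻¹ *ᵥ Pi.single j 1) = Pi.single j (1 : ℝ) := by
    rw [mulVec_mulVec, mul_nonsing_inv A hA, one_mulVec]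
  have := nonneg_of_nonneg_mulVec hoff hrow (u := A⁻¹ *ᵥ Pi.single j 1)
    (fun l => by rw [hcol, Pi.single_apply]; split_ifs <;> norm_num) i
  simpa [mulVec_single_one] using this

theorem Matrix.vecMul_le_mul_diag [DecidableEq ι] (hoff : ∀ i j, i ≠ j → A i j ≤ 0) {c : ι → ℝ}
    (hc : ∀ i, 0 ≤ c i) (i : ι) : (c ᵥ* A) i ≤ c i * A i i := by
  rw [vecMul, dotProduct, ← add_sum_erase _ _ (mem_univ i), add_le_iff_nonpos_right]
  exact sum_nonpos fun j hj => mul_nonpos_of_nonneg_of_nonpos (hc j) (hoff j i (ne_of_mem_erase hj))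

theorem Matrix.exists_pos_vecMul_eq [DecidableEq ι] (hoff : ∀ i j, i ≠ j → A i j ≤ 0)
    (hrow : ∀ i, 0 < ∑ j, A i j) {b : ι → ℝ} (hb : ∀ i, 0 < b i) :
    ∃ c : ι → ℝ, (∀ i, 0 < c i) ∧ c ᵥ* A = b := by
  have hA := (isUnit_iff_isUnit_det A).1 (isUnit_of_sum_row_pos hoff hrow)
  have hcA : (b ᵥ* A⁻¹) ᵥ* A = b := by rw [vecMul_vecMul, nonsing_inv_mul A hA, vecMul_one]
  have hc : ∀ i, 0 ≤ (b ᵥ* A⁻¹) i := fun i =>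
    sum_nonneg fun j _ => mul_nonneg (hb j).le (inv_nonneg_of_sum_row_pos hoff hrow j i)
  refine ⟨b ᵥ* A⁻¹, fun i => (hc i).lt_of_ne fun h => ?_, hcA⟩
  have := vecMul_le_mul_diag hoff hc i
  rw [hcA, ← h, zero_mul] at this
  exact (hb i).not_ge this

end ZMatrix

section Comparison

variable {ι : Type*} [DecidableEq ι]

def comparisonMatrix (B : Matrix ι ι ℝ) : Matrix ι ι ℝ :=
  Matrix.of fun i j => if i = j then |B i i| else -|B i j|

theorem comparisonMatrix_apply_of_ne (B : Matrix ι ι ℝ) {i j : ι} (h : i ≠ j) :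
    comparisonMatrix B i j = -|B i j| := by
  simp [comparisonMatrix, h]

theorem comparisonMatrix_apply_self (B : Matrix ι ι ℝ) (i : ι) :
    comparisonMatrix B i i = |B i i| := by
  simp [comparisonMatrix]

theorem sum_comparisonMatrix_row [Fintype ι] (B : Matrix ι ι ℝ) (i : ι) :
    ∑ j, comparisonMatrix B i j = |B i i| - ∑ j ∈ univ.erase i, |B i j| := by
  rw [← add_sum_erase _ _ (mem_univ i), comparisonMatrix_apply_self, sub_eq_add_neg,
    ← sum_neg_distrib]
  exact congrArg _ <| sum_congr rfl fun j hj =>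
    comparisonMatrix_apply_of_ne B (ne_of_mem_erase hj).symm

theorem two_mul_mul_mul_le_comparisonMatrix {B : Matrix ι ι ℝ} (hdiag : ∀ i, B i i ≤ 0)
    (y : ι → ℝ) (i j : ι) :
    2 * (B i j * y i * y j) ≤ -(comparisonMatrix B i j * (y i ^ 2 + y j ^ 2)) := by
  rcases eq_or_ne i j with rfl | hij
  · rw [comparisonMatrix_apply_self, abs_of_nonpos (hdiag i)]
    exact le_of_eq (by ring)
  · rw [comparisonMatrix_apply_of_ne B hij, neg_mul, neg_neg]
    calc 2 * (B i j * y i * y j) ≤ |B i j| * (2 * |y i| * |y j|) :=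
          (le_abs_self _).trans_eq (by simp only [abs_mul, abs_two]; ring)
      _ ≤ |B i j| * (y i ^ 2 + y j ^ 2) := by
          gcongr
          simpa only [sq_abs] using two_mul_le_add_sq |y i| |y j|

theorem two_mul_sum_mul_mulVec_le [Fintype ι] {B : Matrix ι ι ℝ} (hdiag : ∀ i, B i i ≤ 0)
    (hrow : ∀ i, 0 ≤ ∑ j, comparisonMatrix B i j) {c : ι → ℝ} (hc : ∀ i, 0 ≤ c i) (y : ι → ℝ) :
    2 * ∑ i, c i * y i * (B *ᵥ y) i ≤ -∑ j, (c ᵥ* comparisonMatrix B) j * y j ^ 2 := by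
  set M := comparisonMatrix B
  have hsplit : ∑ i, ∑ j, c i * (M i j * (y i ^ 2 + y j ^ 2)) =
      ∑ i, c i * (∑ j, M i j) * y i ^ 2 + ∑ j, (c ᵥ* M) j * y j ^ 2 := by
    simp only [mul_add, sum_add_distrib, vecMul, dotProduct, sum_mul, mul_sum]
    rw [sum_comm (f := fun i j => c i * (M i j * y j ^ 2))]
    congr 1 <;> exact sum_congr rfl fun _ _ => sum_congr rfl fun _ _ => by ring
  have hrest : 0 ≤ ∑ i, c i * (∑ j, M i j) * y i ^ 2 :=
    sum_nonneg fun i _ => mul_nonneg (mul_nonneg (hc i) (hrow i)) (sq_nonneg _)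
  calc 2 * ∑ i, c i * y i * (B *ᵥ y) i = ∑ i, ∑ j, c i * (2 * (B i j * y i * y j)) := by
        simp only [mulVec, dotProduct, mul_sum]
        exact sum_congr rfl fun _ _ => sum_congr rfl fun _ _ => by ring
    _ ≤ ∑ i, ∑ j, c i * -(M i j * (y i ^ 2 + y j ^ 2)) := by
        gcongr with i _ j _
        · exact hc i
        · exact two_mul_mul_mul_le_comparisonMatrix hdiag y i j
    _ = -∑ i, ∑ j, c i * (M i j * (y i ^ 2 + y j ^ 2)) := by simp only [mul_neg, sum_neg_distrib]
    _ ≤ -∑ j, (c ᵥ* M) j * y j ^ 2 := by linarith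

theorem exists_pos_sum_mul_mulVec_le_neg_sum_sq [Fintype ι] {B : Matrix ι ι ℝ}
    (hdiag : ∀ i, B i i ≤ 0)
    (hSDD : ∀ i, ∑ j ∈ univ.erase i, |B i j| < |B i i|) :
    ∃ c : ι → ℝ, (∀ i, 0 < c i) ∧ ∀ y, ∑ i, c i * y i * (B *ᵥ y) i ≤ -∑ i, y i ^ 2 := by
  have hrow (i : ι) : 0 < ∑ j, comparisonMatrix B i j := by
    rw [sum_comparisonMatrix_row]; linarith [hSDD i]
  have hoff (i j : ι) (h : i ≠ j) : comparisonMatrix B i j ≤ 0 := by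
    rw [comparisonMatrix_apply_of_ne B h]; exact neg_nonpos.2 (abs_nonneg _)
  obtain ⟨c, hc, hcA⟩ := exists_pos_vecMul_eq hoff hrow (b := fun _ => 2) fun _ => two_pos
  refine ⟨c, hc, fun y => ?_⟩
  have := two_mul_sum_mul_mulVec_le hdiag (fun i => (hrow i).le) (fun i => (hc i).le) y
  rw [hcA, ← mul_sum] at this
  linarith

end Comparison

section PartialDerivatives

variable {n : ℕ}

theorem pdv_eq_fderiv {F : (Fin n → ℝ) → ℝ} {x : Fin n → ℝ} (hF : DifferentiableAt ℝ F x)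
    (j : Fin n) : pdv F j x = fderiv ℝ F x (Pi.single j 1) := by
  have hFx : HasFDerivAt F (fderiv ℝ F x) (Function.update x j (x j)) := by
    rw [Function.update_eq_self]; exact hF.hasFDerivAt
  exact (hFx.comp_hasDerivAt (x j) (hasDerivAt_update x j (x j))).deriv

theorem contDiff_pdv {F : (Fin n → ℝ) → ℝ} {k m : WithTop ℕ∞} (hF : ContDiff ℝ k F)
    (hmk : m + 1 ≤ k) (j : Fin n) : ContDiff ℝ m (pdv F j) := by
  have hF1 : Differentiable ℝ F := (hF.of_le (le_add_self.trans hmk)).differentiable one_ne_zero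
  rw [show pdv F j = fun x => fderiv ℝ F x (Pi.single j 1) from
    funext fun x => pdv_eq_fderiv (hF1 x) j]
  exact (hF.fderiv_right hmk).clm_apply contDiff_const

theorem hasFDerivAt_pi_pdv {g : Fin n → (Fin n → ℝ) → ℝ} {x : Fin n → ℝ}
    (hg : ∀ i, DifferentiableAt ℝ (g i) x) :
    HasFDerivAt (fun z i => g i z)
      (LinearMap.toContinuousLinearMap (toLin' (Matrix.of fun i j => pdv (g i) j x))) x := by
  refine (hasFDerivAt_pi.2 fun i => (hg i).hasFDerivAt).congr_fderiv ?_
  refine ContinuousLinearMap.coe_injective ((Pi.basisFun ℝ (Fin n)).ext fun j => ?_)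
  ext i
  simp [pdv_eq_fderiv (hg i)]

end PartialDerivatives

theorem sum_mul_mul_le_norm_mul_norm {n : ℕ} (c y e : Fin n → ℝ) :
    ∑ i, c i * y i * e i ≤ (∑ i, |c i|) * ‖y‖ * ‖e‖ := by
  rw [sum_mul, sum_mul]
  refine sum_le_sum fun i _ => (le_abs_self _).trans ?_
  rw [abs_mul, abs_mul, mul_assoc, mul_assoc]
  gcongr
  · exact norm_le_pi_norm y i
  · exact norm_le_pi_norm e i

theorem eventually_sum_mul_le_of_hasFDerivAt {n : ℕ} {Φ : (Fin n → ℝ) → Fin n → ℝ}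
    {L : (Fin n → ℝ) →L[ℝ] Fin n → ℝ} {x₀ : Fin n → ℝ} (hΦ : HasFDerivAt Φ L x₀)
    (hΦ₀ : Φ x₀ = 0) {c : Fin n → ℝ} {a : ℝ} (ha : 0 < a)
    (hL : ∀ y, ∑ i, c i * y i * L y i ≤ -a * euclNorm y ^ 2) :
    ∀ᶠ z in 𝓝 x₀, ∑ i, c i * (z - x₀) i * Φ z i ≤ -(a / 2) * euclNorm (z - x₀) ^ 2 := by
  set C := ∑ i, |c i|
  have hC : 0 ≤ C := sum_nonneg fun i _ => abs_nonneg _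
  have hε : 0 < a / (2 * (C + 1)) := by positivity
  filter_upwards [hΦ.isLittleO.def hε] with z hz
  set y := z - x₀
  rw [hΦ₀, sub_zero] at hz
  have herr := sum_mul_mul_le_norm_mul_norm c y (Φ z - L y)
  have hy := norm_le_euclNorm y
  have : C * ‖y‖ * ‖Φ z - L y‖ ≤ a / 2 * euclNorm y ^ 2 := by
    calc C * ‖y‖ * ‖Φ z - L y‖ ≤ C * ‖y‖ * (a / (2 * (C + 1)) * ‖y‖) := by gcongr
      _ = a / 2 * (C / (C + 1)) * ‖y‖ ^ 2 := by field_simp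
      _ ≤ a / 2 * 1 * euclNorm y ^ 2 := by
          gcongr
          exact div_le_one_of_le₀ (by linarith) (by linarith)
      _ = a / 2 * euclNorm y ^ 2 := by ring
  have hsplit : ∑ i, c i * y i * Φ z i =
      ∑ i, c i * y i * L y i + ∑ i, c i * y i * (Φ z - L y) i := by
    rw [← sum_add_distrib]
    exact sum_congr rfl fun i _ => by simp only [Pi.sub_apply]; ring
  linarith [hL y]

theorem le_mul_exp_of_hasDerivAt_le {V V' : ℝ → ℝ} {ρ κ μ : ℝ}
    (hV : ∀ t, 0 ≤ t → HasDerivAt V (V' t) t) (hdecay : ∀ t, 0 ≤ t → V t < ρ → V' t ≤ -κ * V t)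
    (hμ : 0 ≤ μ) (hμκ : μ < κ) (hV₀ : 0 ≤ V 0) (hV₀ρ : V 0 < ρ) {t : ℝ} (ht : 0 ≤ t) :
    V t ≤ V 0 * Real.exp (-μ * t) := by
  have hexp : ∀ s, 0 ≤ s → Real.exp (-μ * s) ≤ 1 := fun s hs =>
    Real.exp_le_one_iff.2 (by nlinarith)
  -- the barrier `(V 0 + η) e^{-μ s}` stays below `ρ`, so `V` cannot catch up with it
  have hbarrier : ∀ η, 0 < η → V 0 + η < ρ → V t ≤ (V 0 + η) * Real.exp (-μ * t) := by
    intro η hη hηρ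
    refine image_le_of_deriv_right_lt_deriv_boundary
      (B := fun s => (V 0 + η) * Real.exp (-μ * s))
      (B' := fun s => -μ * ((V 0 + η) * Real.exp (-μ * s)))
      (fun s hs => (hV s hs.1).continuousAt.continuousWithinAt)
      (fun s hs => (hV s hs.1).hasDerivWithinAt) (by simp [hη.le]) (fun s => ?_)
      (fun s hs hVs => ?_) ⟨ht, le_rfl⟩
    · have := ((hasDerivAt_id s).const_mul (-μ)).exp.const_mul (V 0 + η)
      exact this.congr_deriv (by simp only [id]; ring)
    · have hB : 0 < (V 0 + η) * Real.exp (-μ * s) := by positivity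
      have hBρ : (V 0 + η) * Real.exp (-μ * s) < ρ :=
        (mul_le_of_le_one_right (by positivity) (hexp s hs.1)).trans_lt hηρ
      have := hdecay s hs.1 (hVs ▸ hBρ)
      rw [hVs] at this
      nlinarith
  have hlim : Tendsto (fun η => (V 0 + η) * Real.exp (-μ * t)) (𝓝[>] 0)
      (𝓝 (V 0 * Real.exp (-μ * t))) := by
    refine tendsto_nhdsWithin_of_tendsto_nhds ?_
    simpa using ((continuous_const.add continuous_id).mul continuous_const).tendsto
      (f := fun η : ℝ => (V 0 + η) * Real.exp (-μ * t)) 0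
  refine ge_of_tendsto hlim ?_
  filter_upwards [Ioo_mem_nhdsGT (sub_pos.2 hV₀ρ)] with η hη
  exact hbarrier η hη.1 (by linarith [hη.2])

theorem Finite.exists_pos_le_and_le {ι : Type*} [Finite ι] {w : ι → ℝ} (hw : ∀ i, 0 < w i) :
    ∃ m > 0, ∃ W > 0, ∀ i, m ≤ w i ∧ w i ≤ W := by
  obtain ⟨A, hA⟩ := Finite.exists_le fun i => (w i)⁻¹
  obtain ⟨B, hB⟩ := Finite.exists_le w
  refine ⟨(max A 1)⁻¹, by positivity, max B 1, by positivity, fun i =>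
    ⟨?_, (hB i).trans (le_max_left _ _)⟩⟩
  rw [inv_le_comm₀ (by positivity) (hw i)]
  exact (hA i).trans (le_max_left _ _)

theorem exists_exp_decay_of_weighted_lyapunov {n : ℕ} {F : (Fin n → ℝ) → Fin n → ℝ}
    {xs w : Fin n → ℝ} (hw : ∀ i, 0 < w i) {δ a : ℝ} (hδ : 0 < δ) (ha : 0 < a)
    (hF : ∀ z, euclNorm (z - xs) < δ →
      ∑ i, w i * (z - xs) i * F z i ≤ -a * euclNorm (z - xs) ^ 2) :
    ∃ r > (0 : ℝ), ∃ M > (0 : ℝ), ∃ lam > (0 : ℝ), ∀ x : ℝ → Fin n → ℝ,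
      (∀ t, 0 ≤ t → ∀ i, HasDerivAt (fun s => x s i) (F (x t) i) t) →
      euclNorm (x 0 - xs) ≤ r → ∀ t, 0 ≤ t →
        euclNorm (x t - xs) ≤ M * Real.exp (-lam * t) * euclNorm (x 0 - xs) := by
  obtain ⟨m, hm, W, hW, hmW⟩ := Finite.exists_pos_le_and_le hw
  refine ⟨δ * Real.sqrt (m / W) / 2, by positivity, Real.sqrt (W / m), by positivity,
    a / W / 2, by positivity, fun x hx hx₀ t ht => ?_⟩
  set e : ℝ → ℝ := fun s => euclNorm (x s - xs)
  set V : ℝ → ℝ := fun s => ∑ i, w i * (x s - xs) i ^ 2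
  have hVlow (s : ℝ) : m * e s ^ 2 ≤ V s := mul_euclNorm_sq_le_sum (fun i => (hmW i).1) _
  have hVup (s : ℝ) : V s ≤ W * e s ^ 2 := sum_le_mul_euclNorm_sq (fun i => (hmW i).2) _
  have hV' (s : ℝ) (hs : 0 ≤ s) :
      HasDerivAt V (2 * ∑ i, w i * (x s - xs) i * F (x s) i) s := by
    refine (HasDerivAt.fun_sum fun i _ => (((hx s hs i).sub_const (xs i)).pow 2).const_mul (w i))
      |>.congr_deriv ?_
    rw [mul_sum]
    exact sum_congr rfl fun i _ => by simp only [Pi.sub_apply]; ring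
  have hdecay (s : ℝ) (hs : 0 ≤ s) (hVs : V s < m * δ ^ 2) :
      2 * ∑ i, w i * (x s - xs) i * F (x s) i ≤ -(2 * (a / W)) * V s := by
    have hes : e s < δ := by
      refine (pow_lt_pow_iff_left₀ (Real.sqrt_nonneg _) hδ.le two_ne_zero).1 ?_
      exact lt_of_mul_lt_mul_left ((hVlow s).trans_lt hVs) hm.le
    have := hF (x s) hes
    have : a / W * V s ≤ a * e s ^ 2 := by
      rw [div_mul_eq_mul_div, div_le_iff₀ hW]; nlinarith [hVup s]
    linarith
  have hV₀ : V 0 < m * δ ^ 2 := by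
    have he₀ : e 0 ^ 2 ≤ (δ * Real.sqrt (m / W) / 2) ^ 2 := by gcongr; exact Real.sqrt_nonneg _
    rw [div_pow, mul_pow, Real.sq_sqrt (by positivity)] at he₀
    calc V 0 ≤ W * e 0 ^ 2 := hVup 0
      _ ≤ W * (δ ^ 2 * (m / W) / 2 ^ 2) := by gcongr
      _ < m * δ ^ 2 := by field_simp; nlinarith [mul_pos hm (pow_pos hδ 2)]
  have hVt := le_mul_exp_of_hasDerivAt_le (μ := a / W) hV' hdecay (by positivity)
    (by linarith [div_pos ha hW]) (sum_nonneg fun i _ => mul_nonneg (hw i).le (sq_nonneg _)) hV₀ ht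
  have hsq : e t ^ 2 ≤ (Real.sqrt (W / m) * Real.exp (-(a / W / 2) * t) * e 0) ^ 2 := by
    rw [mul_pow, mul_pow, Real.sq_sqrt (by positivity), ← Real.exp_nat_mul]
    refine le_of_mul_le_mul_left ?_ hm
    calc m * e t ^ 2 ≤ V 0 * Real.exp (-(a / W) * t) := (hVlow t).trans hVt
      _ ≤ W * e 0 ^ 2 * Real.exp (-(a / W) * t) := by gcongr; exact hVup 0
      _ = m * (W / m * Real.exp (↑2 * (-(a / W / 2) * t)) * e 0 ^ 2) := by
          field_simp
  have he₀ : 0 ≤ e 0 := Real.sqrt_nonneg _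
  exact (pow_le_pow_iff_left₀ (Real.sqrt_nonneg _) (by positivity) two_ne_zero).1 hsq

theorem statement15 {N : ℕ} (f : Fin N → (Fin N → ℝ) → ℝ)
    (hf : ∀ i, ContDiff ℝ 2 (f i))
    (xs : Fin N → ℝ)
    (hcrit : ∀ i, pdv (f i) i xs = 0)
    (hneg : ∀ i, pdv (fun z => pdv (f i) i z) i xs < 0)
    (hSDD : ∀ i, ∑ j ∈ Finset.univ.erase i, |pdv (fun z => pdv (f i) i z) j xs| <
      |pdv (fun z => pdv (f i) i z) i xs|)
    (k : Fin N → ℝ) (hk : ∀ i, 0 < k i) :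
    ∃ r > (0 : ℝ), ∃ M > (0 : ℝ), ∃ lam > (0 : ℝ),
      ∀ x : ℝ → Fin N → ℝ,
        (∀ t, 0 ≤ t → ∀ i, HasDerivAt (fun s => x s i) (k i * pdv (f i) i (x t)) t) →
        euclNorm (fun i => x 0 i - xs i) ≤ r →
        ∀ t, 0 ≤ t →
          euclNorm (fun i => x t i - xs i) ≤
            M * Real.exp (-lam * t) * euclNorm (fun i => x 0 i - xs i) := by
  set g : Fin N → (Fin N → ℝ) → ℝ := fun i => pdv (f i) i
  have hg (i : Fin N) : Differentiable ℝ (g i) :=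
    (contDiff_pdv (hf i) (by norm_num) i).differentiable one_ne_zero
  set B : Matrix (Fin N) (Fin N) ℝ := Matrix.of fun i j => pdv (g i) j xs
  obtain ⟨c, hc, hcB⟩ :=
    exists_pos_sum_mul_mulVec_le_neg_sum_sq (B := B) (fun i => (hneg i).le) hSDD
  have hlin := eventually_sum_mul_le_of_hasFDerivAt (hasFDerivAt_pi_pdv fun i => hg i xs)
    (funext hcrit) one_pos (c := c) fun y => by
      simpa only [euclNorm_sq, toLin'_apply, LinearMap.coe_toContinuousLinearMap', neg_mul,
        one_mul] using hcB y
  obtain ⟨δ, hδ, hδlin⟩ := Metric.eventually_nhds_iff.1 hlin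
  refine exists_exp_decay_of_weighted_lyapunov (F := fun z i => k i * g i z)
    (w := fun i => c i / k i) (fun i => div_pos (hc i) (hk i)) hδ (half_pos one_pos)
    fun z hz => ?_
  calc ∑ i, c i / k i * (z - xs) i * (k i * g i z) = ∑ i, c i * (z - xs) i * g i z :=
        sum_congr rfl fun i _ => by field_simp [(hk i).ne']
    _ ≤ -(1 / 2) * euclNorm (z - xs) ^ 2 :=
        hδlin ((dist_eq_norm z xs).trans_le (norm_le_euclNorm _) |>.trans_lt hz)
end

section
/- Consider a game with N players with continuously differentiable payoff functions f_i : ℝ^N → ℝ whose pseudogradient G(x) = (∂f_1/∂x_1(x),…,∂f_N/∂x_N(x)) satisfies (x − z)ᵀ(G(x) − G(z)) ≤ −m‖x − z‖² for all x, z ∈ ℝ^N and some m > 0, and let x* be the unique point with G(x*) = 0. Fix positive constants k̄_1,…,k̄_N and let k̄_max = max_i k̄_i, k̄_min = min_i k̄_i. Then every solution x(t) of the gradient play dynamics ẋ_i = k̄_i ∂f_i/∂x_i(x) converges exponentially to x*: ‖x(t) − x*‖ ≤ √(k̄_max/k̄_min) · e^{−m k̄_min t} · ‖x(0) − x*‖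 for all t ≥ 0. -/
open scoped BigOperators

/-!
Along a trajectory of gradient play, the weighted distance `V(x) = ∑ᵢ (xᵢ - x*ᵢ)² / k̄ᵢ` to the
Nash equilibrium has derivative `2 ∑ᵢ (xᵢ - x*ᵢ) Gᵢ(x)`, which strong monotonicity of the
pseudogradient (with `G(x*) = 0`) bounds by `-2m ‖x - x*‖² ≤ -2m k̄_min V(x)`. Grönwall gives
`V(x(t)) ≤ e^{-2m k̄_min t} V(x(0))`, and `k̄_min V ≤ ‖x - x*‖² ≤ k̄_max V` converts this into the
stated bound on `‖x(t) - x*‖`.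
-/

open Real Finset

theorem le_mul_exp_of_hasDerivAt_le_mul {W W' : ℝ → ℝ} {K : ℝ}
    (hW : ∀ s, 0 ≤ s → HasDerivAt W (W' s) s) (hbound : ∀ s, 0 ≤ s → W' s ≤ K * W s)
    {t : ℝ} (ht : 0 ≤ t) : W t ≤ W 0 * exp (K * t) := by
  have hcont : ContinuousOn W (Set.Icc 0 t) := fun s hs =>
    (hW s hs.1).continuousAt.continuousWithinAt
  have := le_gronwallBound_of_liminf_deriv_right_le (K := K) (ε := 0) hcont
    (fun s hs _ hr => (hW s hs.1).hasDerivWithinAt.liminf_right_slope_le hr) le_rfl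
    (fun s hs => (add_zero (K * W s)).symm ▸ hbound s hs.1) t ⟨ht, le_rfl⟩
  rwa [gronwallBound_ε0, sub_zero] at this

theorem euclNorm_le_of_sum_sq_le {n : ℕ} {v w : Fin n → ℝ} {a b : ℝ} (ha : 0 ≤ a) (hb : 0 ≤ b)
    (h : ∑ i, v i ^ 2 ≤ a * b ^ 2 * ∑ i, w i ^ 2) : euclNorm v ≤ √a * b * euclNorm w := by
  unfold euclNorm
  calc √(∑ i, v i ^ 2) ≤ √(a * b ^ 2 * ∑ i, w i ^ 2) := Real.sqrt_le_sqrt h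
    _ = √a * b * √(∑ i, w i ^ 2) := by
      rw [Real.sqrt_mul (by positivity), Real.sqrt_mul ha, Real.sqrt_sq hb]

section WeightedSqNorm

variable {ι : Type*} [Fintype ι]

noncomputable def weightedSqNorm (k v : ι → ℝ) : ℝ := ∑ i, v i ^ 2 / k i

variable {k : ι → ℝ} (hk : ∀ i, 0 < k i)
include hk

theorem mul_weightedSqNorm_le_sum_sq {kmin : ℝ} (hkmin : ∀ i, kmin ≤ k i) (v : ι → ℝ) :
    kmin * weightedSqNorm k v ≤ ∑ i, v i ^ 2 := by
  rw [weightedSqNorm, mul_sum]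
  refine sum_le_sum fun i _ => ?_
  rw [mul_div_assoc', div_le_iff₀ (hk i), mul_comm kmin]
  exact mul_le_mul_of_nonneg_left (hkmin i) (sq_nonneg _)

theorem sum_sq_le_mul_weightedSqNorm {kmax : ℝ} (hkmax : ∀ i, k i ≤ kmax) (v : ι → ℝ) :
    ∑ i, v i ^ 2 ≤ kmax * weightedSqNorm k v := by
  rw [weightedSqNorm, mul_sum]
  refine sum_le_sum fun i _ => ?_
  rw [mul_div_assoc', le_div_iff₀ (hk i), mul_comm kmax]
  exact mul_le_mul_of_nonneg_left (hkmax i) (sq_nonneg _)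

theorem hasDerivAt_weightedSqNorm_sub {x : ℝ → ι → ℝ} {g : ι → ℝ} {t : ℝ} (xs : ι → ℝ)
    (hx : ∀ i, HasDerivAt (fun s => x s i) (k i * g i) t) :
    HasDerivAt (fun s => weightedSqNorm k (fun i => x s i - xs i))
      (2 * ∑ i, (x t i - xs i) * g i) t := by
  rw [mul_sum]
  refine (HasDerivAt.fun_sum (u := univ) fun i _ =>
    (((hx i).sub_const (xs i)).pow 2).div_const (k i)).congr_deriv (sum_congr rfl fun i _ => ?_)
  field_simp [(hk i).ne']
  ring

theorem weightedSqNorm_sub_le_exp_of_stronglyMonotone {G : (ι → ℝ) → ι → ℝ} {m kmin : ℝ}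
    (hm : 0 ≤ m) (hkmin : ∀ i, kmin ≤ k i)
    (hmono : ∀ y z : ι → ℝ, ∑ i, (y i - z i) * (G y i - G z i) ≤ -m * ∑ i, (y i - z i) ^ 2)
    {xs : ι → ℝ} (hxs : ∀ i, G xs i = 0) {x : ℝ → ι → ℝ}
    (hx : ∀ t, 0 ≤ t → ∀ i, HasDerivAt (fun s => x s i) (k i * G (x t) i) t)
    {t : ℝ} (ht : 0 ≤ t) :
    weightedSqNorm k (fun i => x t i - xs i) ≤
      weightedSqNorm k (fun i => x 0 i - xs i) * exp (-(2 * m * kmin) * t) := by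
  refine le_mul_exp_of_hasDerivAt_le_mul
    (fun s hs => hasDerivAt_weightedSqNorm_sub hk xs (hx s hs)) (fun s _ => ?_) ht
  have hdissip : ∑ i, (x s i - xs i) * G (x s) i ≤ -m * ∑ i, (x s i - xs i) ^ 2 := by
    simpa only [hxs, sub_zero] using hmono (x s) xs
  have hcomp := mul_le_mul_of_nonneg_left
    (mul_weightedSqNorm_le_sum_sq hk hkmin (fun i => x s i - xs i)) hm
  linarith

end WeightedSqNorm

theorem statement16_general {N : ℕ} (f : Fin N → (Fin N → ℝ) → ℝ)
    (m : ℝ) (hm : 0 < m)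
    (hmono : ∀ x z : Fin N → ℝ,
      ∑ i, (x i - z i) * (pdv (f i) i x - pdv (f i) i z) ≤ -m * ∑ i, (x i - z i) ^ 2)
    (xs : Fin N → ℝ) (hxs : ∀ i, pdv (f i) i xs = 0)
    (k : Fin N → ℝ) (hk : ∀ i, 0 < k i)
    (kmax kmin : ℝ)
    (hkmax : IsGreatest (Set.range k) kmax)
    (hkmin : IsLeast (Set.range k) kmin) :
    ∀ x : ℝ → Fin N → ℝ,
      (∀ t, 0 ≤ t → ∀ i, HasDerivAt (fun s => x s i) (k i * pdv (f i) i (x t)) t) →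
      ∀ t, 0 ≤ t →
        euclNorm (fun i => x t i - xs i) ≤
          Real.sqrt (kmax / kmin) * Real.exp (-m * kmin * t) *
            euclNorm (fun i => x 0 i - xs i) := by
  intro x hx t ht
  have hkmin0 : 0 < kmin := by obtain ⟨i, rfl⟩ := hkmin.1; exact hk i
  have hkmax0 : 0 < kmax := by obtain ⟨i, rfl⟩ := hkmax.1; exact hk i
  have hle_kmax : ∀ i, k i ≤ kmax := fun i => hkmax.2 ⟨i, rfl⟩
  have hkmin_le : ∀ i, kmin ≤ k i := fun i => hkmin.2 ⟨i, rfl⟩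
  have hdecay := weightedSqNorm_sub_le_exp_of_stronglyMonotone (G := fun y i => pdv (f i) i y)
    hk hm.le hkmin_le hmono hxs hx ht
  have hinit : weightedSqNorm k (fun i => x 0 i - xs i) ≤ (∑ i, (x 0 i - xs i) ^ 2) / kmin := by
    rw [le_div_iff₀ hkmin0, mul_comm]
    exact mul_weightedSqNorm_le_sum_sq hk hkmin_le _
  refine euclNorm_le_of_sum_sq_le (by positivity) (exp_pos _).le ?_
  calc ∑ i, (x t i - xs i) ^ 2
      ≤ kmax * weightedSqNorm k (fun i => x t i - xs i) :=
        sum_sq_le_mul_weightedSqNorm hk hle_kmax _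
    _ ≤ kmax * ((∑ i, (x 0 i - xs i) ^ 2) / kmin * exp (-(2 * m * kmin) * t)) := by
        gcongr
        exact hdecay.trans (by gcongr)
    _ = kmax / kmin * exp (-m * kmin * t) ^ 2 * ∑ i, (x 0 i - xs i) ^ 2 := by
        rw [← exp_nat_mul]
        ring_nf

theorem statement16 {N : ℕ} (hN : 0 < N) (f : Fin N → (Fin N → ℝ) → ℝ)
    (hf : ∀ i, ContDiff ℝ 1 (f i))
    (m : ℝ) (hm : 0 < m)
    (hmono : ∀ x z : Fin N → ℝ,
      ∑ i, (x i - z i) * (pdv (f i) i x - pdv (f i) i z) ≤ -m * ∑ i, (x i - z i) ^ 2)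
    (xs : Fin N → ℝ) (hxs : ∀ i, pdv (f i) i xs = 0)
    (k : Fin N → ℝ) (hk : ∀ i, 0 < k i)
    (kmax kmin : ℝ)
    (hkmax : IsGreatest (Set.range k) kmax)
    (hkmin : IsLeast (Set.range k) kmin) :
    ∀ x : ℝ → Fin N → ℝ,
      (∀ t, 0 ≤ t → ∀ i, HasDerivAt (fun s => x s i) (k i * pdv (f i) i (x t)) t) →
      ∀ t, 0 ≤ t →
        euclNorm (fun i => x t i - xs i) ≤
          Real.sqrt (kmax / kmin) * Real.exp (-m * kmin * t) *
            euclNorm (fun i => x 0 i - xs i) :=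
  statement16_general f m hm hmono xs hxs k hk kmax kmin hkmax hkmin
end
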